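/- Let P = sgp⟨X | uᵢ = vᵢ⟩ be a semigroup presentation and S^c the set of binomial relations of a Gröbner–Shirshov basis of the ideal of k⟨X⟩ generated by {uᵢ − vᵢ} (consisting again of binomials u − v with u, v ∈ X*). Then the map sending a word to its class induces a k-algebra isomorphism k⟨X⟩/Id({uᵢ − vᵢ}) ≅ k[X*/ρ(S)], where ρ(S) is the congruence generated by S; in particular the S^c-irreducible words form a set of unique normal forms for the elements of the semigroup P. -/

import Mathlib

/-! Both `k⟨X⟩/Id(R)` and `k[X*/ρ(R)]` are the universal `k`-algebra generated by `X*` subject to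
`u = v` for `(u, v) ∈ R`, hence isomorphic.  Also `u ≡ v (mod ρ(R))` iff `u - v ∈ Id(R)`, which
gives `ρ(Sc) ≤ ρ(rel)` as `Id(Sc) = Id(rel)`.  Rewriting `a·u·b ↦ a·v·b` along `(u, v) ∈ Sc`
strictly decreases a word in a well-order, so every class contains an `Sc`-irreducible word.  Two
distinct irreducible words in one class would give a nonzero binomial in the ideal whose leading
word, one of the two words, is reducible by the Gröbner–Shirshov property. -/

/-- The monomial `u ∈ X*` viewed in the free associative algebra `k⟨X⟩`. -/
noncomputable def mono (k : Type*) [Field k] {X : Type*} (u : FreeMonoid X) :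
    MonoidAlgebra k (FreeMonoid X) := MonoidAlgebra.of k (FreeMonoid X) u

/-- The leading (maximal) word of a nonzero polynomial. -/
noncomputable def lw {k X : Type*} [Field k] [LinearOrder (FreeMonoid X)]
    (f : MonoidAlgebra k (FreeMonoid X)) (hf : f ≠ 0) : FreeMonoid X :=
  f.coeff.support.max' (Finsupp.support_nonempty_iff.mpr (fun h => hf (by
    rw [← MonoidAlgebra.ofCoeff_coeff f, h, MonoidAlgebra.ofCoeff_zero])))

/-- The two-sided ideal generated by `S`, as the `k`-span of all `S`-words `a·s·b`. -/
noncomputable def idSpan {k X : Type*} [Field k]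
    (S : Set (MonoidAlgebra k (FreeMonoid X))) :
    Submodule k (MonoidAlgebra k (FreeMonoid X)) :=
  Submodule.span k {x | ∃ (a b : FreeMonoid X) (s : MonoidAlgebra k (FreeMonoid X)),
    s ∈ S ∧ x = mono k a * s * mono k b}

/-- The set of binomials `u − v` associated to a set of semigroup relations. -/
noncomputable def binoms (k : Type*) [Field k] {X : Type*}
    (R : Set (FreeMonoid X × FreeMonoid X)) : Set (MonoidAlgebra k (FreeMonoid X)) :=
  {f | ∃ p ∈ R, f = mono k p.1 - mono k p.2}

open MonoidAlgebra

theorem MonoidAlgebra.mapDomainAlgHom_of (k : Type*) [CommSemiring k] {M N : Type*} [Monoid M]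
    [Monoid N] (f : M →* N) (w : M) :
    mapDomainAlgHom k k f (of k M w) = of k N (f w) := by
  simp [of_apply, mapDomain_single]

section MonomialQuotient

variable (k : Type*) [CommSemiring k] {M : Type*} [Monoid M] (R : Set (M × M))

theorem conGen_le_ker_mkAlgHom_comp_of :
    (conGen fun u v : M => (u, v) ∈ R) ≤
      Con.ker ((RingQuot.mkAlgHom k fun a b : MonoidAlgebra k M =>
        ∃ p ∈ R, a = of k M p.1 ∧ b = of k M p.2).toMonoidHom.comp (of k M)) :=
  Con.conGen_le.mpr fun u v h => RingQuot.mkAlgHom_rel k ⟨(u, v), h, rfl, rfl⟩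

noncomputable def ringQuotEquivConQuotient :
    RingQuot (fun a b : MonoidAlgebra k M => ∃ p ∈ R, a = of k M p.1 ∧ b = of k M p.2) ≃ₐ[k]
      MonoidAlgebra k (conGen fun u v : M => (u, v) ∈ R).Quotient :=
  AlgEquiv.ofAlgHom
    (RingQuot.liftAlgHom k ⟨mapDomainAlgHom k k (conGen fun u v : M => (u, v) ∈ R).mk', by
      rintro _ _ ⟨p, hp, rfl, rfl⟩
      rw [mapDomainAlgHom_of, mapDomainAlgHom_of]
      exact congrArg (of k _) ((Con.eq _).mpr (ConGen.Rel.of _ _ hp))⟩)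
    (lift k _ _ ((conGen fun u v : M => (u, v) ∈ R).lift _ (conGen_le_ker_mkAlgHom_comp_of k R)))
    (by
      refine algHom_ext (fun m => ?_) (Subsingleton.elim _ _)
      obtain ⟨w, rfl⟩ := Con.mk'_surjective m
      rw [← of_apply, AlgHom.comp_apply, lift_of, Con.lift_mk', MonoidHom.comp_apply,
        RingHom.toMonoidHom_eq_coe, MonoidHom.coe_coe, AlgHom.toRingHom_eq_coe,
        AlgHom.coe_toRingHom, RingQuot.liftAlgHom_mkAlgHom_apply, mapDomainAlgHom_of,
        AlgHom.id_apply])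
    (by
      refine RingQuot.ringQuot_ext' _ _ _ (algHom_ext (fun w => ?_) (Subsingleton.elim _ _))
      rw [← of_apply, AlgHom.comp_apply, AlgHom.comp_apply, RingQuot.liftAlgHom_mkAlgHom_apply,
        mapDomainAlgHom_of, lift_of, Con.lift_mk']
      rfl)

theorem ringQuotEquivConQuotient_mkAlgHom_of (w : M) :
    ringQuotEquivConQuotient k R (RingQuot.mkAlgHom k _ (of k M w)) =
      of k _ ((conGen fun u v : M => (u, v) ∈ R).mk' w) := by
  rw [ringQuotEquivConQuotient, AlgEquiv.ofAlgHom_apply, RingQuot.liftAlgHom_mkAlgHom_apply,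
    mapDomainAlgHom_of]

end MonomialQuotient

def IsReducible {M : Type*} [Mul M] (S : Set (M × M)) (w : M) : Prop :=
  ∃ p ∈ S, ∃ a b : M, w = a * p.1 * b

theorem exists_not_isReducible_conGen {M : Type*} [Monoid M] [LT M] [WellFoundedLT M]
    (hmul : ∀ u v w₁ w₂ : M, u < v → w₁ * u * w₂ < w₁ * v * w₂)
    {S : Set (M × M)} (hS : ∀ p ∈ S, p.2 < p.1) (w : M) :
    ∃ u, ¬ IsReducible S u ∧ conGen (fun u v : M => (u, v) ∈ S) u w := by
  induction w using WellFoundedLT.induction with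
  | ind w ih =>
    by_cases hw : IsReducible S w
    · obtain ⟨p, hp, a, b, rfl⟩ := hw
      obtain ⟨u, hu, hu_rel⟩ := ih (a * p.2 * b) (hmul _ _ a b (hS p hp))
      have hstep : conGen (fun u v : M => (u, v) ∈ S) (a * p.2 * b) (a * p.1 * b) :=
        Con.mul _ (Con.mul _ (Con.refl _ a) (Con.symm _ (ConGen.Rel.of _ _ hp))) (Con.refl _ b)
      exact ⟨u, hu, Con.trans _ hu_rel hstep⟩
    · exact ⟨w, hw, Con.refl _ w⟩

section FreeAlgebra

variable {k X : Type*} [Field k]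

theorem mono_mul (u v : FreeMonoid X) : mono k (u * v) = mono k u * mono k v :=
  map_mul (of k (FreeMonoid X)) u v

theorem mono_one : mono k (1 : FreeMonoid X) = 1 :=
  map_one (of k (FreeMonoid X))

theorem subset_idSpan (S : Set (MonoidAlgebra k (FreeMonoid X))) : S ⊆ idSpan S :=
  fun s hs => Submodule.subset_span ⟨1, 1, s, hs, by rw [mono_one, one_mul, mul_one]⟩

theorem mono_mul_mul_mono_mem_idSpan {S : Set (MonoidAlgebra k (FreeMonoid X))}
    {f : MonoidAlgebra k (FreeMonoid X)} (hf : f ∈ idSpan S) (c d : FreeMonoid X) :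
    mono k c * f * mono k d ∈ idSpan S := by
  have hle : idSpan S ≤ (idSpan S).comap
      (LinearMap.mulLeft k (mono k c) ∘ₗ LinearMap.mulRight k (mono k d)) := by
    refine Submodule.span_le.mpr ?_
    rintro _ ⟨a, b, s, hs, rfl⟩
    refine Submodule.subset_span ⟨c * a, b * d, s, hs, ?_⟩
    simp only [LinearMap.comp_apply, LinearMap.mulLeft_apply, LinearMap.mulRight_apply,
      mono_mul, mul_assoc]
  simpa only [Submodule.mem_comap, LinearMap.comp_apply, LinearMap.mulLeft_apply,
    LinearMap.mulRight_apply, mul_assoc] using hle hf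

theorem mono_sub_mono_mem_idSpan_binoms_of_conGen {R : Set (FreeMonoid X × FreeMonoid X)}
    {u v : FreeMonoid X}
    (h : conGen (fun u v : FreeMonoid X => (u, v) ∈ R) u v) :
    mono k u - mono k v ∈ idSpan (binoms k R) := by
  induction h with
  | of u v huv => exact subset_idSpan _ ⟨(u, v), huv, rfl⟩
  | refl u => simpa only [sub_self] using zero_mem _
  | symm _ ih => simpa only [neg_sub] using neg_mem ih
  | trans _ _ ih₁ ih₂ => simpa only [sub_add_sub_cancel] using add_mem ih₁ ih₂
  | @mul w x y z _ _ ih₁ ih₂ =>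
    have hsplit : mono k (w * y) - mono k (x * z) =
        mono k w * (mono k y - mono k z) * mono k 1 +
          mono k 1 * (mono k w - mono k x) * mono k z := by
      simp only [mono_mul, mono_one]; noncomm_ring
    rw [hsplit]
    exact add_mem (mono_mul_mul_mono_mem_idSpan ih₂ w 1) (mono_mul_mul_mono_mem_idSpan ih₁ 1 z)

theorem mapDomainAlgHom_mk'_eq_zero_of_mem_idSpan {R : Set (FreeMonoid X × FreeMonoid X)}
    {f : MonoidAlgebra k (FreeMonoid X)} (hf : f ∈ idSpan (binoms k R)) :
    mapDomainAlgHom k k (conGen fun u v : FreeMonoid X => (u, v) ∈ R).mk' f = 0 := by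
  refine (Submodule.span_le (p := LinearMap.ker
    (mapDomainAlgHom k k (conGen fun u v : FreeMonoid X => (u, v) ∈ R).mk').toLinearMap)).mpr
    ?_ hf
  rintro _ ⟨a, b, _, ⟨p, hp, rfl⟩, rfl⟩
  have hp' : (conGen fun u v : FreeMonoid X => (u, v) ∈ R).mk' p.1 =
      (conGen fun u v : FreeMonoid X => (u, v) ∈ R).mk' p.2 :=
    (Con.eq _).mpr (ConGen.Rel.of _ _ hp)
  simp only [SetLike.mem_coe, LinearMap.mem_ker, AlgHom.toLinearMap_apply, map_mul, map_sub,
    mono, mapDomainAlgHom_of, hp', sub_self, mul_zero, zero_mul]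

theorem mono_sub_mono_mem_idSpan_binoms_iff {R : Set (FreeMonoid X × FreeMonoid X)}
    {u v : FreeMonoid X} :
    mono k u - mono k v ∈ idSpan (binoms k R) ↔
      conGen (fun u v : FreeMonoid X => (u, v) ∈ R) u v := by
  refine ⟨fun h => ?_, mono_sub_mono_mem_idSpan_binoms_of_conGen⟩
  have h0 := mapDomainAlgHom_mk'_eq_zero_of_mem_idSpan h
  rw [map_sub, sub_eq_zero, mono, mono, mapDomainAlgHom_of, mapDomainAlgHom_of] at h0
  exact (Con.eq _).mp (of_injective h0)

theorem lw_mono_sub_mono_eq_or [LinearOrder (FreeMonoid X)] {u v : FreeMonoid X}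
    (h : mono k u - mono k v ≠ 0) : lw _ h = u ∨ lw _ h = v := by
  classical
  have hlw : lw _ h ∈ (mono k u - mono k v).coeff.support := Finset.max'_mem _ _
  have hsupp : (mono k u - mono k v).coeff.support ⊆ {u, v} := by
    rw [coeff_sub]
    refine Finsupp.support_sub.trans ?_
    rw [mono, mono, of_apply, of_apply, coeff_single, coeff_single,
      Finsupp.support_single _ one_ne_zero, Finsupp.support_single _ one_ne_zero, Finset.insert_eq]
  simpa using hsupp hlw

theorem eq_of_mono_sub_mono_mem_idSpan_of_not_isReducible [LinearOrder (FreeMonoid X)]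
    {S : Set (FreeMonoid X × FreeMonoid X)}
    (hGS : ∀ f ∈ idSpan (binoms k S), ∀ hf : f ≠ 0, IsReducible S (lw f hf))
    {u v : FreeMonoid X} (hu : ¬ IsReducible S u) (hv : ¬ IsReducible S v)
    (h : mono k u - mono k v ∈ idSpan (binoms k S)) : u = v := by
  by_contra hne
  have hf : mono k u - mono k v ≠ 0 := sub_ne_zero.mpr fun h => hne (of_injective h)
  rcases lw_mono_sub_mono_eq_or hf with hl | hl
  · exact hu (hl ▸ hGS _ h hf)
  · exact hv (hl ▸ hGS _ h hf)

end FreeAlgebra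

/-- For a semigroup presentation `P = sgp⟨X | uᵢ = vᵢ⟩` with set of relations `rel`, let
`Sc` be the set of binomial relations of a Gröbner–Shirshov basis of the ideal of `k⟨X⟩`
generated by the binomials `uᵢ − vᵢ` (again consisting of binomials `u − v` with leading
word `u`).  Then the map sending a word to its congruence class induces a `k`-algebra
isomorphism `k⟨X⟩/Id({uᵢ − vᵢ}) ≅ k[X*/ρ(rel)]`, and the `Sc`-irreducible words map
bijectively onto the quotient monoid, i.e. they form unique normal forms for `P`. -/
theorem semigroup_algebra_normal_forms {k X : Type*} [Field k]
    [LinearOrder (FreeMonoid X)] [WellFoundedLT (FreeMonoid X)]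
    (hmul : ∀ u v w₁ w₂ : FreeMonoid X, u < v → w₁ * u * w₂ < w₁ * v * w₂)
    (rel Sc : Set (FreeMonoid X × FreeMonoid X))
    (hmonic : ∀ p ∈ Sc, p.2 < p.1)
    (hsame : idSpan (binoms k Sc) = idSpan (binoms k rel))
    (hGS : ∀ f ∈ idSpan (binoms k Sc), ∀ hf : f ≠ 0,
      ∃ p ∈ Sc, ∃ a b : FreeMonoid X, lw f hf = a * p.1 * b) :
    (∃ φ : RingQuot (fun a b : MonoidAlgebra k (FreeMonoid X) =>
          ∃ p ∈ rel, a = mono k p.1 ∧ b = mono k p.2) ≃ₐ[k]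
        MonoidAlgebra k (conGen fun u v : FreeMonoid X => (u, v) ∈ rel).Quotient,
      ∀ w : FreeMonoid X,
        φ (RingQuot.mkAlgHom k _ (mono k w)) =
          MonoidAlgebra.of k (conGen fun u v : FreeMonoid X => (u, v) ∈ rel).Quotient
            (Con.mk' _ w)) ∧
    Function.Bijective
      (fun u : {u : FreeMonoid X // ¬ ∃ p ∈ Sc, ∃ a b : FreeMonoid X, u = a * p.1 * b} =>
        Con.mk' (conGen fun u v : FreeMonoid X => (u, v) ∈ rel) u.1) := by
  have hSc_le_rel : (conGen fun u v : FreeMonoid X => (u, v) ∈ Sc) ≤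
      conGen fun u v : FreeMonoid X => (u, v) ∈ rel :=
    Con.conGen_le.mpr fun u v h => mono_sub_mono_mem_idSpan_binoms_iff.mp <|
      hsame ▸ subset_idSpan (binoms k Sc) ⟨(u, v), h, rfl⟩
  refine ⟨⟨ringQuotEquivConQuotient k rel, ringQuotEquivConQuotient_mkAlgHom_of k rel⟩, ?_, ?_⟩
  · rintro ⟨u, hu⟩ ⟨v, hv⟩ huv
    exact Subtype.ext <| eq_of_mono_sub_mono_mem_idSpan_of_not_isReducible hGS hu hv <|
      hsame ▸ mono_sub_mono_mem_idSpan_binoms_iff.mpr ((Con.eq _).mp huv)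
  · intro m
    obtain ⟨w, rfl⟩ := Con.mk'_surjective m
    obtain ⟨u, hu, huw⟩ := exists_not_isReducible_conGen hmul hmonic w
    exact ⟨⟨u, hu⟩, (Con.eq _).mpr (hSc_le_rel huw)⟩
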